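/- Under the rank condition rank(J_μ) + rank(J_{κu}) = rank(J), the μ-component of the minimum-norm solution Δx_tot = −H⁺b equals the back-substitution formula H_{μμ}⁺(−b_μ − H_{μ,κu}Δx_{κu,tot}), where Δx_{κu,tot} is the (κ,u)-component of Δx_tot. -/

import Mathlib

open Matrix

/-!
Write `H = JᵀJ`. Since `H⁺ = H⁺HH⁺` and `H⁺H` is symmetric, `H⁺Jᵀ = Jᵀ(JH⁺ᵀH⁺Jᵀ)`, so
`Δx = Jᵀw` lies in the row space of `J`, and in particular `Δx_μ = Jμᵀw`. The first block row of
the normal equations `HΔx = −Jᵀr` reads `H_{μμ}Δx_μ = −b_μ − H_{μ,κu}Δx_{κu}`, and `H_{μμ}⁺H_{μμ}`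
is the identity on the row space of `Jμ`, so applying `H_{μμ}⁺` recovers `Δx_μ`.
-/

/-- The four Penrose conditions characterizing the Moore–Penrose pseudo-inverse. -/
def IsMoorePenrose {m n : Type*} [Fintype m] [Fintype n]
    (A : Matrix m n ℝ) (P : Matrix n m ℝ) : Prop :=
  A * P * A = A ∧ P * A * P = P ∧ (A * P)ᵀ = A * P ∧ (P * A)ᵀ = P * A

variable {m n p : Type*} [Fintype m] [Fintype n]

theorem Matrix.mul_eq_mul_of_transpose_mul_self_mul_eq {J : Matrix m n ℝ} {X Y : Matrix n p ℝ}
    (h : Jᵀ * J * X = Jᵀ * J * Y) : J * X = J * Y := by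
  rw [← sub_eq_zero, ← Matrix.mul_sub, ← conjTranspose_mul_self_mul_eq_zero,
    conjTranspose_eq_transpose_of_trivial, Matrix.mul_sub, h, sub_self]

namespace IsMoorePenrose

variable {J : Matrix m n ℝ} {P : Matrix n n ℝ}

theorem transpose_mul_self_mul_mul_transpose (hP : IsMoorePenrose (Jᵀ * J) P) :
    Jᵀ * J * P * Jᵀ = Jᵀ := by
  classical
  have hJ : J * (Pᵀ * (Jᵀ * J)) = J * (1 : Matrix n n ℝ) := by
    refine mul_eq_mul_of_transpose_mul_self_mul_eq ?_
    simpa [Matrix.mul_assoc] using congrArg transpose hP.1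
  simpa [Matrix.mul_assoc] using congrArg transpose hJ

theorem mul_transpose_mul_self_mul_transpose (hP : IsMoorePenrose (Jᵀ * J) P) :
    P * (Jᵀ * J) * Jᵀ = Jᵀ := by
  classical
  have hJ : J * (P * (Jᵀ * J)) = J * (1 : Matrix n n ℝ) := by
    refine mul_eq_mul_of_transpose_mul_self_mul_eq ?_
    simpa [Matrix.mul_assoc] using hP.1
  simpa [Matrix.mul_assoc, hP.2.2.2] using congrArg transpose hJ

theorem mul_transpose_eq (hP : IsMoorePenrose (Jᵀ * J) P) :
    P * Jᵀ = Jᵀ * (J * Pᵀ * P * Jᵀ) :=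
  calc P * Jᵀ = P * (Jᵀ * J) * P * Jᵀ := by rw [hP.2.1]
    _ = (P * (Jᵀ * J))ᵀ * P * Jᵀ := by rw [hP.2.2.2]
    _ = Jᵀ * (J * Pᵀ * P * Jᵀ) := by
      simp only [transpose_mul, transpose_transpose, Matrix.mul_assoc]

end IsMoorePenrose

theorem stmt_8_general {N nμ nku : ℕ}
    (Jμ : Matrix (Fin N) (Fin nμ) ℝ) (Jku : Matrix (Fin N) (Fin nku) ℝ)
    (r : Fin N → ℝ)
    -- H⁺, the Moore–Penrose pseudo-inverse of H = JᵀJ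
    (Hp : Matrix (Fin nμ ⊕ Fin nku) (Fin nμ ⊕ Fin nku) ℝ)
    (hHp : IsMoorePenrose ((fromCols Jμ Jku)ᵀ * fromCols Jμ Jku) Hp)
    -- H_{μμ}⁺, the Moore–Penrose pseudo-inverse of H_{μμ} = JμᵀJμ
    (Pμ : Matrix (Fin nμ) (Fin nμ) ℝ) (hPμ : IsMoorePenrose (Jμᵀ * Jμ) Pμ)
    -- Δx_tot = −H⁺b (minimum-norm solution)
    (Δx : Fin nμ ⊕ Fin nku → ℝ)
    (hΔx : Δx = -(Hp *ᵥ ((fromCols Jμ Jku)ᵀ *ᵥ r))) :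
    (fun i => Δx (Sum.inl i)) =
      Pμ *ᵥ (-(Jμᵀ *ᵥ r) - (Jμᵀ * Jku) *ᵥ fun j => Δx (Sum.inr j)) := by
  set J := fromCols Jμ Jku
  have hJt : Jᵀ = fromRows Jμᵀ Jkuᵀ := transpose_fromCols Jμ Jku
  set w := -((J * Hpᵀ * Hp * Jᵀ) *ᵥ r)
  have hrange : Δx = Jᵀ *ᵥ w := by
    rw [hΔx, mulVec_mulVec, hHp.mul_transpose_eq, ← mulVec_mulVec, mulVec_neg]
  have hnormal : Jᵀ *ᵥ (J *ᵥ Δx) = -(Jᵀ *ᵥ r) := by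
    rw [hΔx, mulVec_neg, mulVec_neg, mulVec_mulVec, mulVec_mulVec, mulVec_mulVec,
      hHp.transpose_mul_self_mul_mul_transpose]
  have hμ : (fun i => Δx (Sum.inl i)) = Jμᵀ *ᵥ w := by
    rw [hrange, hJt, fromRows_mulVec]; rfl
  have hnormal_μ : Jμᵀ *ᵥ (Jμ *ᵥ (fun i => Δx (Sum.inl i)) + Jku *ᵥ fun j => Δx (Sum.inr j)) =
      -(Jμᵀ *ᵥ r) := by
    funext i
    have hnormal_i := congrFun hnormal (Sum.inl i)
    simp only [J, hJt, fromRows_mulVec, fromCols_mulVec, Pi.neg_apply, Sum.elim_inl] at hnormal_i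
    exact hnormal_i
  calc (fun i => Δx (Sum.inl i)) = (Pμ * (Jμᵀ * Jμ) * Jμᵀ) *ᵥ w := by
        rw [hPμ.mul_transpose_mul_self_mul_transpose, hμ]
    _ = _ := by
        rw [← hnormal_μ, mulVec_add, mulVec_mulVec, mulVec_mulVec, add_sub_cancel_right, hμ,
          mulVec_mulVec, mulVec_mulVec]

theorem stmt_8 {N nμ nku : ℕ}
    (Jμ : Matrix (Fin N) (Fin nμ) ℝ) (Jku : Matrix (Fin N) (Fin nku) ℝ)
    (r : Fin N → ℝ)
    -- rank condition: rank(Jμ) + rank(Jku) = rank(J)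
    (hrank : Jμ.rank + Jku.rank = (fromCols Jμ Jku).rank)
    -- H⁺, the Moore–Penrose pseudo-inverse of H = JᵀJ
    (Hp : Matrix (Fin nμ ⊕ Fin nku) (Fin nμ ⊕ Fin nku) ℝ)
    (hHp : IsMoorePenrose ((fromCols Jμ Jku)ᵀ * fromCols Jμ Jku) Hp)
    -- H_{μμ}⁺, the Moore–Penrose pseudo-inverse of H_{μμ} = JμᵀJμ
    (Pμ : Matrix (Fin nμ) (Fin nμ) ℝ) (hPμ : IsMoorePenrose (Jμᵀ * Jμ) Pμ)
    -- Δx_tot = −H⁺b (minimum-norm solution)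
    (Δx : Fin nμ ⊕ Fin nku → ℝ)
    (hΔx : Δx = -(Hp *ᵥ ((fromCols Jμ Jku)ᵀ *ᵥ r))) :
    (fun i => Δx (Sum.inl i)) =
      Pμ *ᵥ (-(Jμᵀ *ᵥ r) - (Jμᵀ * Jku) *ᵥ fun j => Δx (Sum.inr j)) :=
  stmt_8_general Jμ Jku r Hp hHp Pμ hPμ Δx hΔx
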